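/- arXiv:1403.3210 — 4 statements merged into one kernel-verified Lean document; each statement's English description precedes it below -/
import Mathlib

section
/- Let C be a nonempty closed convex subset of a real Hilbert space H and T : C → C a nonexpansive mapping with Fix(T) ≠ ∅. Then I − T is demiclosed: if xₙ ∈ C converges weakly to x ∈ C and (I − T)xₙ converges strongly to y, then (I − T)x = y. -/
/-!
Nonexpansiveness of `T` makes `I - T` cocoercive: with `u = x₀ - T x₀`,
`‖(xₙ - T xₙ) - u‖² ≤ 2 ⟪xₙ - x₀, (xₙ - T xₙ) - u⟫`.
The left side tends to `‖y - u‖²`, and the right side to `0`, since the inner product of a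
weakly convergent sequence with a strongly convergent one converges (weakly convergent
sequences are bounded by the uniform boundedness principle). Hence `u = y`.
-/

open RealInnerProductSpace Filter Topology

section WeakConvergence

variable {H : Type*} [NormedAddCommGroup H] [InnerProductSpace ℝ H] [CompleteSpace H]
  {x : ℕ → H} {x₀ : H}

theorem exists_norm_le_of_tendsto_inner
    (hweak : ∀ z : H, Tendsto (fun n => ⟪x n, z⟫) atTop (𝓝 ⟪x₀, z⟫)) :
    ∃ M, ∀ n, ‖x n‖ ≤ M := by
  obtain ⟨M, hM⟩ := banach_steinhaus (g := fun n => innerSL ℝ (x n)) fun z => by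
    obtain ⟨b, hb⟩ := (hweak z).norm.bddAbove_range
    exact ⟨b, fun n => hb ⟨n, rfl⟩⟩
  exact ⟨M, fun n => by simpa using hM n⟩

theorem tendsto_inner_of_tendsto_inner_of_tendsto
    (hweak : ∀ z : H, Tendsto (fun n => ⟪x n, z⟫) atTop (𝓝 ⟪x₀, z⟫))
    {v : ℕ → H} {v₀ : H} (hv : Tendsto v atTop (𝓝 v₀)) :
    Tendsto (fun n => ⟪x n, v n⟫) atTop (𝓝 ⟪x₀, v₀⟫) := by
  obtain ⟨M, hM⟩ := exists_norm_le_of_tendsto_inner hweak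
  have hsmall : Tendsto (fun n => ⟪x n, v n - v₀⟫) atTop (𝓝 0) := by
    have hbound : Tendsto (fun n => M * ‖v n - v₀‖) atTop (𝓝 0) := by
      simpa using ((hv.sub_const v₀).norm).const_mul M
    refine squeeze_zero_norm (fun n => ?_) hbound
    calc ‖⟪x n, v n - v₀⟫‖ ≤ ‖x n‖ * ‖v n - v₀‖ := norm_inner_le_norm _ _
      _ ≤ M * ‖v n - v₀‖ := by gcongr; exact hM n
  simpa [inner_sub_right] using hsmall.add (hweak v₀)

end WeakConvergence

theorem norm_sq_le_two_inner_of_norm_sub_le {H : Type*} [NormedAddCommGroup H]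
    [InnerProductSpace ℝ H] {p q : H} (h : ‖p - q‖ ≤ ‖p‖) :
    ‖q‖ ^ 2 ≤ 2 * ⟪p, q⟫ := by
  have hsq : ‖p - q‖ ^ 2 ≤ ‖p‖ ^ 2 := pow_le_pow_left₀ (norm_nonneg _) h 2
  rw [norm_sub_sq_real] at hsq
  linarith

theorem stmt5_general {H : Type*} [NormedAddCommGroup H] [InnerProductSpace ℝ H]
    [CompleteSpace H]
    (C : Set H)
    (T : H → H)
    (hT : ∀ x ∈ C, ∀ y ∈ C, ‖T x - T y‖ ≤ ‖x - y‖)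
    (x : ℕ → H) (hx : ∀ n, x n ∈ C) (x₀ : H) (hx₀ : x₀ ∈ C)
    (hweak : ∀ z : H, Tendsto (fun n => ⟪x n, z⟫) atTop (nhds ⟪x₀, z⟫))
    (y : H) (hy : Tendsto (fun n => x n - T (x n)) atTop (nhds y)) :
    x₀ - T x₀ = y := by
  set u := x₀ - T x₀
  have hcocoercive : ∀ n, ‖(x n - T (x n)) - u‖ ^ 2 ≤ 2 * ⟪x n - x₀, (x n - T (x n)) - u⟫ :=
    fun n => norm_sq_le_two_inner_of_norm_sub_le <| by
      convert hT (x n) (hx n) x₀ hx₀ using 2; simp only [u]; abel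
  have hlhs : Tendsto (fun n => ‖(x n - T (x n)) - u‖ ^ 2) atTop (𝓝 (‖y - u‖ ^ 2)) :=
    ((hy.sub_const u).norm).pow 2
  have hrhs : Tendsto (fun n => 2 * ⟪x n - x₀, (x n - T (x n)) - u⟫) atTop (𝓝 0) := by
    have hlim := (tendsto_inner_of_tendsto_inner_of_tendsto hweak (hy.sub_const u)).sub
      (tendsto_const_nhds.inner (hy.sub_const u) (x := x₀))
    simpa [inner_sub_left] using hlim.const_mul 2
  have hle : ‖y - u‖ ^ 2 ≤ 0 := le_of_tendsto_of_tendsto' hlhs hrhs hcocoercive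
  exact (norm_sub_eq_zero_iff.mp <| pow_eq_zero_iff two_ne_zero |>.mp <|
    le_antisymm hle (sq_nonneg _)).symm

theorem stmt5 {H : Type*} [NormedAddCommGroup H] [InnerProductSpace ℝ H]
    [CompleteSpace H]
    (C : Set H) (hC : C.Nonempty) (hCc : IsClosed C) (hCv : Convex ℝ C)
    (T : H → H) (hTself : ∀ x ∈ C, T x ∈ C)
    (hT : ∀ x ∈ C, ∀ y ∈ C, ‖T x - T y‖ ≤ ‖x - y‖)
    (hFix : ∃ x ∈ C, T x = x)
    (x : ℕ → H) (hx : ∀ n, x n ∈ C) (x₀ : H) (hx₀ : x₀ ∈ C)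
    (hweak : ∀ z : H, Tendsto (fun n => ⟪x n, z⟫) atTop (nhds ⟪x₀, z⟫))
    (y : H) (hy : Tendsto (fun n => x n - T (x n)) atTop (nhds y)) :
    x₀ - T x₀ = y :=
  stmt5_general C T hT x hx x₀ hx₀ hweak y hy
end

section
/- Let C be a nonempty closed bounded subset of a Banach space X and {Tₙ} a sequence of nearly nonexpansive self-mappings of C with respect to a sequence {aₙ} ⊆ [0,∞) with aₙ → 0, such that ∑ₙ sup_{x∈C} ‖Tₙx − T_{n+1}x‖ < ∞ (equivalently, the deviations D_C(Tₙ, T_{n+1}) are summable). Then for each x ∈ C, {Tₙx} converges strongly to some point of C; moreover the map T defined by Tz = lim Tₙz is nonexpansive and sup_{x∈C} ‖Tₙx − Tx‖ → 0. -/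
open Filter Topology

/-!
Summability of the deviations `D_C(Tₙ, Tₙ₊₁)` makes every orbit `n ↦ Tₙ x` Cauchy, and the tail
estimate `‖Tₙ x − T x‖ ≤ ∑_{m ≥ n} D_C(Tₘ, Tₘ₊₁)` is uniform in `x`, which gives uniform
convergence. Nonexpansiveness of `T` follows by letting `n → ∞` in `‖Tₙx − Tₙy‖ ≤ ‖x − y‖ + aₙ`.
-/

section MetricLimits

variable {X : Type*} [PseudoMetricSpace X]

theorem exists_mem_tendsto_of_dist_le_of_summable [CompleteSpace X] {s : Set X} (hs : IsClosed s)
    {u : ℕ → X} (hu : ∀ n, u n ∈ s) {d : ℕ → ℝ} (hd : ∀ n, dist (u n) (u (n + 1)) ≤ d n)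
    (hsum : Summable d) : ∃ l ∈ s, Tendsto u atTop (𝓝 l) := by
  obtain ⟨l, hl⟩ := cauchySeq_tendsto_of_complete (cauchySeq_of_dist_le_of_summable d hd hsum)
  exact ⟨l, hs.mem_of_tendsto hl (Eventually.of_forall hu), hl⟩

theorem dist_le_of_tendsto_of_dist_le_add {u v : ℕ → X} {p q : X} (hu : Tendsto u atTop (𝓝 p))
    (hv : Tendsto v atTop (𝓝 q)) {c : ℝ} {a : ℕ → ℝ} (ha : Tendsto a atTop (𝓝 0))
    (huv : ∀ n, dist (u n) (v n) ≤ c + a n) : dist p q ≤ c := by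
  have hbound : Tendsto (fun n => c + a n) atTop (𝓝 c) := by
    simpa using tendsto_const_nhds.add ha
  exact le_of_tendsto_of_tendsto' (hu.dist hv) hbound huv

theorem tendsto_iSup_dist_zero_of_dist_le_of_summable {ι : Type*} {F : ℕ → ι → X} {G : ι → X}
    {d : ℕ → ℝ} (hd0 : ∀ n, 0 ≤ d n) (hd : ∀ n i, dist (F n i) (F (n + 1) i) ≤ d n)
    (hsum : Summable d) (hG : ∀ i, Tendsto (fun n => F n i) atTop (𝓝 (G i))) :
    Tendsto (fun n => ⨆ i, dist (F n i) (G i)) atTop (𝓝 0) := by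
  have htail : Tendsto (fun n => ∑' m, d (n + m)) atTop (𝓝 0) := by
    simpa only [add_comm] using tendsto_sum_nat_add d
  refine squeeze_zero (fun n => Real.iSup_nonneg fun i => dist_nonneg) (fun n => ?_) htail
  exact Real.iSup_le (fun i => dist_le_tsum_of_dist_le_of_tendsto d (hd · i) hsum (hG i) n)
    (tsum_nonneg fun m => hd0 _)

end MetricLimits

theorem norm_sub_le_iSup_of_mapsTo {X : Type*} [SeminormedAddCommGroup X] {C : Set X}
    (hC : Bornology.IsBounded C) {f g : X → X} (hf : Set.MapsTo f C C) (hg : Set.MapsTo g C C)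
    (x : C) : ‖f x - g x‖ ≤ ⨆ y : C, ‖f y - g y‖ := by
  obtain ⟨R, hR⟩ := hC.exists_norm_le
  refine le_ciSup (f := fun y : C => ‖f y - g y‖) ⟨R + R, ?_⟩ x
  rintro _ ⟨y, rfl⟩
  exact (norm_sub_le _ _).trans (add_le_add (hR _ (hf y.2)) (hR _ (hg y.2)))

theorem stmt6_general {X : Type*} [NormedAddCommGroup X] [CompleteSpace X]
    (C : Set X) (hCc : IsClosed C) (hCb : Bornology.IsBounded C)
    (T : ℕ → X → X) (hTself : ∀ n, ∀ x ∈ C, T n x ∈ C)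
    (a : ℕ → ℝ) (ha0 : Tendsto a atTop (nhds 0))
    (hT : ∀ n, ∀ x ∈ C, ∀ y ∈ C, ‖T n x - T n y‖ ≤ ‖x - y‖ + a n)
    (hsum : Summable (fun n => ⨆ x : C, ‖T n x - T (n + 1) x‖)) :
    (∀ x ∈ C, ∃ l ∈ C, Tendsto (fun n => T n x) atTop (nhds l)) ∧
      ∀ S : X → X, (∀ z ∈ C, Tendsto (fun n => T n z) atTop (nhds (S z))) →
        (∀ x ∈ C, ∀ y ∈ C, ‖S x - S y‖ ≤ ‖x - y‖) ∧
          Tendsto (fun n => ⨆ x : C, ‖T n x - S x‖) atTop (nhds 0) := by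
  have hstep : ∀ n, ∀ x : C, dist (T n x) (T (n + 1) x) ≤ ⨆ y : C, ‖T n y - T (n + 1) y‖ :=
    fun n x => (dist_eq_norm _ _).trans_le
      (norm_sub_le_iSup_of_mapsTo hCb (hTself n) (hTself (n + 1)) x)
  refine ⟨fun x hx => exists_mem_tendsto_of_dist_le_of_summable hCc (hTself · x hx)
    (fun n => hstep n ⟨x, hx⟩) hsum, fun S hS => ⟨fun x hx y hy => ?_, ?_⟩⟩
  · simpa only [dist_eq_norm] using
      dist_le_of_tendsto_of_dist_le_add (hS x hx) (hS y hy) ha0 fun n => by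
        simpa only [dist_eq_norm] using hT n x hx y hy
  · simpa only [dist_eq_norm] using
      tendsto_iSup_dist_zero_of_dist_le_of_summable (F := fun n (x : C) => T n x)
        (fun n => Real.iSup_nonneg fun _ => norm_nonneg _) hstep hsum fun x => hS x x.2

theorem stmt6 {X : Type*} [NormedAddCommGroup X] [NormedSpace ℝ X] [CompleteSpace X]
    (C : Set X) (hC : C.Nonempty) (hCc : IsClosed C) (hCb : Bornology.IsBounded C)
    (T : ℕ → X → X) (hTself : ∀ n, ∀ x ∈ C, T n x ∈ C)
    (a : ℕ → ℝ) (ha : ∀ n, 0 ≤ a n) (ha0 : Tendsto a atTop (nhds 0))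
    (hT : ∀ n, ∀ x ∈ C, ∀ y ∈ C, ‖T n x - T n y‖ ≤ ‖x - y‖ + a n)
    (hsum : Summable (fun n => ⨆ x : C, ‖T n x - T (n + 1) x‖)) :
    (∀ x ∈ C, ∃ l ∈ C, Tendsto (fun n => T n x) atTop (nhds l)) ∧
      ∀ S : X → X, (∀ z ∈ C, Tendsto (fun n => T n z) atTop (nhds (S z))) →
        (∀ x ∈ C, ∀ y ∈ C, ‖S x - S y‖ ≤ ‖x - y‖) ∧
          Tendsto (fun n => ⨆ x : C, ‖T n x - S x‖) atTop (nhds 0) :=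
  stmt6_general C hCc hCb T hTself a ha0 hT hsum
end

section
/- Let λ₁, …, λ_N > 0 with ∑ λᵢ = 1 and T₁, …, T_N nonexpansive self-mappings of a nonempty closed convex subset C of a real Hilbert space with ⋂ᵢ Fix(Tᵢ) ≠ ∅. Then the convex combination T = ∑ λᵢTᵢ is a nonexpansive self-mapping of C and Fix(T) = ⋂ᵢ Fix(Tᵢ). -/
/-!
Nonexpansiveness of `∑ λᵢ Tᵢ` is the triangle inequality. For the fixed points, let `p` be a common
fixed point and `x = ∑ λᵢ Tᵢ x`. Each `Tᵢ x` lies in the closed ball of radius `‖x - p‖` about `p`,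
while their weighted average `x` lies on its boundary; since a Hilbert space is strictly convex,
this forces all `Tᵢ x` to coincide, and hence to equal `x`.
-/

open Finset Metric

section StrictConvex

variable {V ι : Type*} [NormedAddCommGroup V] [NormedSpace ℝ V] [StrictConvexSpace ℝ V]
  [Fintype ι] {w : ι → ℝ}

theorem eq_of_sum_smul_eq_of_forall_dist_le (hw : ∀ i, 0 < w i) (hw1 : ∑ i, w i = 1)
    {z : ι → V} {x p : V} (hx : ∑ i, w i • z i = x) (hz : ∀ i, dist (z i) p ≤ dist x p) (i : ι) :
    z i = x := by
  have hconst : ∀ j, z j = z i := by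
    by_contra! ⟨j, hj⟩
    have := sum_mem_ball_of_strictConvexSpace (fun k _ ↦ (hw k).le) hw1 (mem_univ j)
      (mem_univ i) hj (hw j).ne' (hw i).ne' (fun k _ ↦ mem_closedBall.2 (hz k))
    rw [hx, mem_ball] at this
    exact lt_irrefl _ this
  rw [← hx, sum_congr rfl fun j _ ↦ by rw [hconst j], ← sum_smul, hw1, one_smul]

theorem sum_smul_apply_eq_self_iff (hw : ∀ i, 0 < w i) (hw1 : ∑ i, w i = 1) {T : ι → V → V}
    {x p : V} (hp : ∀ i, T i p = p) (hT : ∀ i, ‖T i x - T i p‖ ≤ ‖x - p‖) :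
    ∑ i, w i • T i x = x ↔ ∀ i, T i x = x := by
  refine ⟨fun hx ↦ eq_of_sum_smul_eq_of_forall_dist_le (p := p) hw hw1 hx fun i ↦ ?_, fun hx ↦ ?_⟩
  · simpa only [dist_eq_norm, hp i] using hT i
  · simp only [hx, ← sum_smul, hw1, one_smul]

end StrictConvex

theorem norm_sum_smul_sub_sum_smul_le {V ι : Type*} [SeminormedAddCommGroup V] [NormedSpace ℝ V]
    [Fintype ι] {w : ι → ℝ} (hw : ∀ i, 0 ≤ w i) (hw1 : ∑ i, w i = 1) {T : ι → V → V} {x y : V}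
    (hT : ∀ i, ‖T i x - T i y‖ ≤ ‖x - y‖) :
    ‖∑ i, w i • T i x - ∑ i, w i • T i y‖ ≤ ‖x - y‖ :=
  calc ‖∑ i, w i • T i x - ∑ i, w i • T i y‖
      = ‖∑ i, w i • (T i x - T i y)‖ := by simp only [smul_sub, sum_sub_distrib]
    _ ≤ ∑ i, w i * ‖T i x - T i y‖ := by
        simpa only [norm_smul, Real.norm_of_nonneg (hw _)] using norm_sum_le univ fun i ↦ w i • (T i x - T i y)
    _ ≤ ∑ i, w i * ‖x - y‖ := by gcongr with i; exacts [hw i, hT i]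
    _ = ‖x - y‖ := by rw [← sum_mul, hw1, one_mul]

theorem stmt8_general {H : Type*} [NormedAddCommGroup H] [InnerProductSpace ℝ H]
    (C : Set H) (hCv : Convex ℝ C)
    (N : ℕ) (lam : Fin N → ℝ) (hlam : ∀ i, 0 < lam i)
    (hlamsum : ∑ i, lam i = 1)
    (T : Fin N → H → H) (hTself : ∀ i, ∀ x ∈ C, T i x ∈ C)
    (hT : ∀ i, ∀ x ∈ C, ∀ y ∈ C, ‖T i x - T i y‖ ≤ ‖x - y‖)
    (hFix : ∃ x ∈ C, ∀ i, T i x = x) :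
    (∀ x ∈ C, (∑ i, lam i • T i x) ∈ C) ∧
      (∀ x ∈ C, ∀ y ∈ C, ‖(∑ i, lam i • T i x) - ∑ i, lam i • T i y‖ ≤ ‖x - y‖) ∧
      ∀ x ∈ C, ((∑ i, lam i • T i x) = x ↔ ∀ i, T i x = x) := by
  obtain ⟨p, hpC, hp⟩ := hFix
  refine ⟨fun x hx ↦ ?_, fun x hx y hy ↦ ?_, fun x hx ↦ ?_⟩
  · exact hCv.sum_mem (fun i _ ↦ (hlam i).le) hlamsum fun i _ ↦ hTself i x hx
  · exact norm_sum_smul_sub_sum_smul_le (fun i ↦ (hlam i).le) hlamsum fun i ↦ hT i x hx y hy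
  · exact sum_smul_apply_eq_self_iff hlam hlamsum hp fun i ↦ hT i x hx p hpC

theorem stmt8 {H : Type*} [NormedAddCommGroup H] [InnerProductSpace ℝ H]
    (C : Set H) (hC : C.Nonempty) (hCc : IsClosed C) (hCv : Convex ℝ C)
    (N : ℕ) (hN : 0 < N) (lam : Fin N → ℝ) (hlam : ∀ i, 0 < lam i)
    (hlamsum : ∑ i, lam i = 1)
    (T : Fin N → H → H) (hTself : ∀ i, ∀ x ∈ C, T i x ∈ C)
    (hT : ∀ i, ∀ x ∈ C, ∀ y ∈ C, ‖T i x - T i y‖ ≤ ‖x - y‖)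
    (hFix : ∃ x ∈ C, ∀ i, T i x = x) :
    (∀ x ∈ C, (∑ i, lam i • T i x) ∈ C) ∧
      (∀ x ∈ C, ∀ y ∈ C, ‖(∑ i, lam i • T i x) - ∑ i, lam i • T i y‖ ≤ ‖x - y‖) ∧
      ∀ x ∈ C, ((∑ i, lam i • T i x) = x ↔ ∀ i, T i x = x) :=
  stmt8_general C hCv N lam hlam hlamsum T hTself hT hFix
end

section
/- Let C be a nonempty closed convex subset of a real Hilbert space H and T : C → C nonexpansive with Fix(T) ≠ ∅. If {xₙ} ⊆ C is bounded and ‖xₙ − Txₙ‖ → 0, then for any z ∈ H, limsup_n ⟨z, xₙ − x*⟩ = ⟨z, x̃ − x*⟩ for some weak cluster point x̃ of {xₙ} which belongs to Fix(T); in particular, if x* ∈ Fix(T) satisfies ⟨z, x − x*⟩ ≤ 0 for all x ∈ Fix(T), then limsup_n ⟨z, xₙ − x*⟩ ≤ 0. -/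
/-!
A bounded sequence in a Hilbert space has a weakly convergent subsequence: inside the closed
span of the sequence, which is separable, this is the sequential Banach–Alaoglu theorem
transported by the Riesz isomorphism. Choose first a subsequence along which
`⟪z, xₙ - x*⟫` tends to its limsup, then a weakly convergent further subsequence with limit `x̃`.
Closed convex sets are weakly closed (Hahn–Banach), so `x̃ ∈ C`. Demiclosedness of `I - T`:
expanding `‖T x̃ - xₙ‖² ≤ (‖x̃ - xₙ‖ + ‖xₙ - T xₙ‖)²` around `x̃` and letting `n → ∞` along the
subsequence gives `‖T x̃ - x̃‖² ≤ 0`.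
-/

open RealInnerProductSpace Filter Topology

section

variable {H : Type*} [NormedAddCommGroup H] [InnerProductSpace ℝ H]

def WeakTendsto {α : Type*} (u : α → H) (l : Filter α) (y : H) : Prop :=
  ∀ w, Tendsto (fun n => ⟪u n, w⟫) l (𝓝 ⟪y, w⟫)

theorem exists_weakTendsto_subseq_of_separableSpace [CompleteSpace H]
    [TopologicalSpace.SeparableSpace H] {x : ℕ → H} {M : ℝ} (hM : ∀ n, ‖x n‖ ≤ M) :
    ∃ y, ∃ φ : ℕ → ℕ, StrictMono φ ∧ WeakTendsto (x ∘ φ) atTop y := by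
  let f : ℕ → WeakDual ℝ H := fun n => StrongDual.toWeakDual (InnerProductSpace.toDual ℝ H (x n))
  have hf : ∀ n, f n ∈ WeakDual.toStrongDual ⁻¹' Metric.closedBall 0 M := fun n => by
    simpa [f] using hM n
  obtain ⟨g, -, φ, hφ, hg⟩ := WeakDual.isSeqCompact_closedBall ℝ H 0 M hf
  refine ⟨(InnerProductSpace.toDual ℝ H).symm (WeakDual.toStrongDual g), φ, hφ, fun w => ?_⟩
  rw [InnerProductSpace.toDual_symm_apply]
  exact ((WeakDual.eval_continuous w).tendsto g).comp hg

theorem exists_weakTendsto_subseq [CompleteSpace H] {x : ℕ → H}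
    (hx : Bornology.IsBounded (Set.range x)) :
    ∃ y, ∃ φ : ℕ → ℕ, StrictMono φ ∧ WeakTendsto (x ∘ φ) atTop y := by
  let K := (Submodule.span ℝ (Set.range x)).topologicalClosure
  have hxK : ∀ n, x n ∈ K :=
    fun n => Submodule.le_topologicalClosure _ (Submodule.subset_span ⟨n, rfl⟩)
  have : TopologicalSpace.SeparableSpace K :=
    ((Set.countable_range x).isSeparable.span.closure).separableSpace
  obtain ⟨M, hM⟩ := hx.exists_norm_le
  obtain ⟨y, φ, hφ, hy⟩ := exists_weakTendsto_subseq_of_separableSpace (H := K)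
    (x := fun n => ⟨x n, hxK n⟩) (M := M) fun n => hM _ ⟨n, rfl⟩
  refine ⟨y, φ, hφ, fun w => ?_⟩
  -- `⟪x n, w⟫ = ⟪x n, P_K w⟫` because `x n ∈ K`.
  simpa using hy (K.orthogonalProjectionOnto w)

theorem Convex.mem_of_weakTendsto [CompleteSpace H] {C : Set H} (hCv : Convex ℝ C)
    (hCc : IsClosed C) {α : Type*} {l : Filter α} [l.NeBot] {u : α → H} {y : H}
    (hu : ∀ n, u n ∈ C) (hy : WeakTendsto u l y) : y ∈ C := by
  by_contra hyC
  obtain ⟨f, r, hfC, hfy⟩ := geometric_hahn_banach_closed_point hCv hCc hyC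
  have hf : Tendsto (fun n => f (u n)) l (𝓝 (f y)) := by
    set s := (InnerProductSpace.toDual ℝ H).symm f
    simpa only [real_inner_comm s, s, InnerProductSpace.toDual_symm_apply] using hy s
  exact (le_of_tendsto hf (Eventually.of_forall fun n => (hfC _ (hu n)).le)).not_gt hfy

theorem sq_norm_apply_sub_add_inner_le {T : H → H} {y u : H} (hT : ‖T y - T u‖ ≤ ‖y - u‖) :
    ‖T y - y‖ ^ 2 + 2 * ⟪T y - y, y - u⟫ ≤ ‖u - T u‖ * (2 * ‖y - u‖ + ‖u - T u‖) := by
  have htri : ‖T y - u‖ ≤ ‖y - u‖ + ‖u - T u‖ := by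
    rw [norm_sub_rev u]
    linarith [norm_sub_le_norm_sub_add_norm_sub (T y) (T u) u]
  have hexp : ‖T y - u‖ ^ 2 = ‖T y - y‖ ^ 2 + 2 * ⟪T y - y, y - u⟫ + ‖y - u‖ ^ 2 := by
    rw [← norm_add_sq_real, sub_add_sub_cancel]
  nlinarith [norm_nonneg (T y - u)]

theorem isFixedPt_of_weakTendsto {C : Set H} {T : H → H}
    (hT : ∀ x ∈ C, ∀ y ∈ C, ‖T x - T y‖ ≤ ‖x - y‖) {u : ℕ → H} {y : H}
    (hu : ∀ n, u n ∈ C) (hub : Bornology.IsBounded (Set.range u)) (hyC : y ∈ C)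
    (huy : WeakTendsto u atTop y) (huT : Tendsto (fun n => ‖u n - T (u n)‖) atTop (𝓝 0)) :
    Function.IsFixedPt T y := by
  obtain ⟨M, hM⟩ := hub.exists_norm_le
  have hbound : ∀ n, ‖T y - y‖ ^ 2 + 2 * ⟪T y - y, y - u n⟫ ≤
      ‖u n - T (u n)‖ * (2 * (‖y‖ + M) + ‖u n - T (u n)‖) := fun n =>
    (sq_norm_apply_sub_add_inner_le (hT y hyC (u n) (hu n))).trans <| by
      have := hM (u n) ⟨n, rfl⟩
      gcongr
      linarith [norm_sub_le y (u n)]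
  have hlhs : Tendsto (fun n => ‖T y - y‖ ^ 2 + 2 * ⟪T y - y, y - u n⟫) atTop
      (𝓝 (‖T y - y‖ ^ 2)) := by
    have := (huy (T y - y)).const_sub ⟪y, T y - y⟫
    simp only [sub_self] at this
    simpa [inner_sub_right, real_inner_comm (T y - y)] using
      (this.const_mul 2).const_add (‖T y - y‖ ^ 2)
  have hrhs : Tendsto (fun n => ‖u n - T (u n)‖ * (2 * (‖y‖ + M) + ‖u n - T (u n)‖)) atTop
      (𝓝 0) := by
    simpa using huT.mul (huT.const_add (2 * (‖y‖ + M)))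
  have : ‖T y - y‖ ^ 2 ≤ 0 := le_of_tendsto_of_tendsto' hlhs hrhs hbound
  exact sub_eq_zero.1 (norm_eq_zero.1 (by nlinarith [norm_nonneg (T y - y)]))

theorem exists_weakTendsto_subseq_limsup_inner [CompleteSpace H] {x : ℕ → H}
    (hx : Bornology.IsBounded (Set.range x)) (z c : H) :
    ∃ y, ∃ φ : ℕ → ℕ, StrictMono φ ∧ WeakTendsto (x ∘ φ) atTop y ∧
      limsup (fun n => ⟪z, x n - c⟫) atTop = ⟪z, y - c⟫ := by
  have ha : Bornology.IsBounded (Set.range fun n => ⟪z, x n - c⟫) := by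
    have := ((innerSL ℝ z).lipschitz.comp (IsometryEquiv.subRight c).isometry.lipschitz
      ).isBounded_image hx
    rwa [← Set.range_comp] at this
  obtain ⟨ψ, hψ, hψlim⟩ := (MapClusterPt.limsup
    ha.bddBelow.isBoundedUnder_of_range.isCoboundedUnder_le
    ha.bddAbove.isBoundedUnder_of_range).tendsto_subseq
  obtain ⟨y, χ, hχ, hy⟩ := exists_weakTendsto_subseq (hx.subset (Set.range_comp_subset_range ψ x))
  refine ⟨y, ψ ∘ χ, hψ.comp hχ, hy, tendsto_nhds_unique (hψlim.comp hχ.tendsto_atTop) ?_⟩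
  simpa [Function.comp_def, inner_sub_right, real_inner_comm z] using (hy z).sub_const ⟪z, c⟫

end

theorem stmt15_general {H : Type*} [NormedAddCommGroup H] [InnerProductSpace ℝ H]
    [CompleteSpace H]
    (C : Set H) (hCc : IsClosed C) (hCv : Convex ℝ C)
    (T : H → H)
    (hT : ∀ x ∈ C, ∀ y ∈ C, ‖T x - T y‖ ≤ ‖x - y‖)
    (x : ℕ → H) (hx : ∀ n, x n ∈ C) (hxb : Bornology.IsBounded (Set.range x))
    (hxT : Tendsto (fun n => ‖x n - T (x n)‖) atTop (nhds 0))
    (z : H) (xs : H) :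
    (∃ xt : H, (xt ∈ C ∧ T xt = xt) ∧
      (∃ φ : ℕ → ℕ, StrictMono φ ∧
        ∀ w : H, Tendsto (fun k => ⟪x (φ k), w⟫) atTop (nhds ⟪xt, w⟫)) ∧
      limsup (fun n => ⟪z, x n - xs⟫) atTop = ⟪z, xt - xs⟫) ∧
    ((∀ w, (w ∈ C ∧ T w = w) → ⟪z, w - xs⟫ ≤ 0) →
      limsup (fun n => ⟪z, x n - xs⟫) atTop ≤ 0) := by
  obtain ⟨xt, φ, hφ, hweak, hlimsup⟩ := exists_weakTendsto_subseq_limsup_inner hxb z xs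
  have hxtC : xt ∈ C := hCv.mem_of_weakTendsto hCc (fun k => hx (φ k)) hweak
  have hTxt : T xt = xt := isFixedPt_of_weakTendsto hT (fun k => hx (φ k))
    (hxb.subset (Set.range_comp_subset_range φ x)) hxtC hweak (hxT.comp hφ.tendsto_atTop)
  exact ⟨⟨xt, ⟨hxtC, hTxt⟩, ⟨φ, hφ, hweak⟩, hlimsup⟩,
    fun hvar => hlimsup ▸ hvar xt ⟨hxtC, hTxt⟩⟩

theorem stmt15 {H : Type*} [NormedAddCommGroup H] [InnerProductSpace ℝ H]
    [CompleteSpace H]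
    (C : Set H) (hC : C.Nonempty) (hCc : IsClosed C) (hCv : Convex ℝ C)
    (T : H → H) (hTself : ∀ x ∈ C, T x ∈ C)
    (hT : ∀ x ∈ C, ∀ y ∈ C, ‖T x - T y‖ ≤ ‖x - y‖)
    (hFix : ∃ x ∈ C, T x = x)
    (x : ℕ → H) (hx : ∀ n, x n ∈ C) (hxb : Bornology.IsBounded (Set.range x))
    (hxT : Tendsto (fun n => ‖x n - T (x n)‖) atTop (nhds 0))
    (z : H) (xs : H) (hxs : xs ∈ C ∧ T xs = xs) :
    (∃ xt : H, (xt ∈ C ∧ T xt = xt) ∧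
      (∃ φ : ℕ → ℕ, StrictMono φ ∧
        ∀ w : H, Tendsto (fun k => ⟪x (φ k), w⟫) atTop (nhds ⟪xt, w⟫)) ∧
      limsup (fun n => ⟪z, x n - xs⟫) atTop = ⟪z, xt - xs⟫) ∧
    ((∀ w, (w ∈ C ∧ T w = w) → ⟪z, w - xs⟫ ≤ 0) →
      limsup (fun n => ⟪z, x n - xs⟫) atTop ≤ 0) :=
  stmt15_general C hCc hCv T hT x hx hxb hxT z xs
end
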